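/- For n ≥ 1, σ₀ − σ₁ = (1/2^{n−1}) ⨂_l (P(0) − P(1)), i.e. the difference of the two parity-conditioned ensemble states equals (1/2^{n−1}) times the n-fold tensor power of |0⟩⟨0| − |+⟩⟨+| = !![1/2, −1/2; −1/2, −1/2]. -/

import Mathlib

/-
Write `P 0 - P 1 = ∑_b (-1)^b P b`. Expanding the tensor power of this sum by multilinearity gives
`∑_j ∏_l (-1)^(j l) ⨂_l P (j l) = ∑_j (-1)^(parity j) ⨂_l P (j l)`, because `b ↦ (-1)^b` is an
additive character of `ZMod 2`; splitting the sum by parity gives `2^(n-1) (σ₀ - σ₁)`.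
-/

open Matrix Finset

/-- Hamming weight of a bit string. -/
def hammingW {n : ℕ} (ν : Fin n → ZMod 2) : ℕ :=
  (Finset.univ.filter fun l => ν l = 1).card

/-- Parity of a bit string. -/
def parity {n : ℕ} (ν : Fin n → ZMod 2) : ZMod 2 := ∑ l, ν l

/-- Tensor product of a family of one-qubit matrices, as a matrix indexed by bit strings. -/
def tens {n : ℕ} (A : Fin n → Matrix (ZMod 2) (ZMod 2) ℂ) :
    Matrix (Fin n → ZMod 2) (Fin n → ZMod 2) ℂ :=
  Matrix.of fun x y => ∏ l, A l (x l) (y l)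

/-- `P 0 = |0⟩⟨0|`, `P 1 = |+⟩⟨+|`. -/
noncomputable def projP (b : ZMod 2) : Matrix (ZMod 2) (ZMod 2) ℂ :=
  if b = 0 then !![1, 0; 0, 0] else (1 / 2 : ℂ) • !![1, 1; 1, 1]

/-- The parity-conditioned ensemble state `σ_b`. -/
noncomputable def sigma (n : ℕ) (b : ZMod 2) :
    Matrix (Fin n → ZMod 2) (Fin n → ZMod 2) ℂ :=
  (1 / 2 ^ (n - 1) : ℂ) •
    ∑ j ∈ Finset.univ.filter (fun j : Fin n → ZMod 2 => parity j = b),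
      tens (fun l => projP (j l))

theorem AddChar.map_sum_eq_prod {A M ι : Type*} [AddCommMonoid A] [CommMonoid M]
    (ψ : AddChar A M) (s : Finset ι) (f : ι → A) :
    ψ (∑ i ∈ s, f i) = ∏ i ∈ s, ψ (f i) := by
  induction s using Finset.cons_induction with
  | empty => simp
  | cons i s hi ih => simp [AddChar.map_add_eq_mul, ih]

noncomputable def signChar : AddChar (ZMod 2) ℂ :=
  AddChar.zmodChar 2 (by norm_num : (-1 : ℂ) ^ 2 = 1)

theorem signChar_zero : signChar 0 = 1 := AddChar.map_zero_eq_one _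

theorem signChar_one : signChar 1 = -1 := by
  simp [signChar, AddChar.zmodChar_apply, ZMod.val_one]

theorem sum_signChar_smul {α M : Type*} [Fintype α] [AddCommGroup M] [Module ℂ M]
    (p : α → ZMod 2) (f : α → M) :
    ∑ a, signChar (p a) • f a =
      ∑ a ∈ univ.filter (p · = 0), f a - ∑ a ∈ univ.filter (p · = 1), f a := by
  have hne : ∀ b : ZMod 2, b ≠ 0 ↔ b = 1 := by decide
  rw [← Finset.sum_filter_add_sum_filter_not univ (p · = 0)]
  simp only [hne, sub_eq_add_neg, ← Finset.sum_neg_distrib]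
  congr 1 <;> refine Finset.sum_congr rfl fun a ha => ?_
  · simp [(Finset.mem_filter.1 ha).2]
  · simp [(Finset.mem_filter.1 ha).2, signChar_one]

section Tensor

variable {n : ℕ}

theorem tens_sum {ι : Type*} [Fintype ι] (A : Fin n → ι → Matrix (ZMod 2) (ZMod 2) ℂ) :
    tens (fun l => ∑ i, A l i) = ∑ f : Fin n → ι, tens (fun l => A l (f l)) := by
  ext x y
  simp [tens, Matrix.sum_apply, Fintype.prod_sum]

theorem tens_smul (c : Fin n → ℂ) (A : Fin n → Matrix (ZMod 2) (ZMod 2) ℂ) :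
    tens (fun l => c l • A l) = (∏ l, c l) • tens A := by
  ext x y
  simp [tens, Finset.prod_mul_distrib]

theorem tens_sum_signChar_smul (A : ZMod 2 → Matrix (ZMod 2) (ZMod 2) ℂ) :
    tens (fun _ : Fin n => ∑ b, signChar b • A b) =
      ∑ j : Fin n → ZMod 2, signChar (parity j) • tens (fun l => A (j l)) := by
  simp only [tens_sum, tens_smul, parity, AddChar.map_sum_eq_prod]

end Tensor

theorem projP_zero_sub_projP_one : projP 0 - projP 1 = ∑ b, signChar b • projP b :=
  calc projP 0 - projP 1 = signChar 0 • projP 0 + signChar 1 • projP 1 := by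
        rw [signChar_zero, signChar_one, one_smul, neg_one_smul, sub_eq_add_neg]
    _ = ∑ b, signChar b • projP b :=
      (Fin.sum_univ_two fun b : ZMod 2 => signChar b • projP b).symm

theorem sigma_sub_sigma_general (n : ℕ) :
    sigma n 0 - sigma n 1 = (1 / 2 ^ (n - 1) : ℂ) • tens (fun _ => projP 0 - projP 1) := by
  rw [projP_zero_sub_projP_one, tens_sum_signChar_smul, sum_signChar_smul, sigma, sigma, smul_sub]

/-- `σ₀ − σ₁ = (1/2^{n−1}) ⨂_l (P 0 − P 1)`. -/
theorem sigma_sub_sigma (n : ℕ) (hn : 1 ≤ n) :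
    sigma n 0 - sigma n 1 = (1 / 2 ^ (n - 1) : ℂ) • tens (fun _ => projP 0 - projP 1) :=
  sigma_sub_sigma_general n
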